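/- arXiv:1706.08188 — 6 statements merged into one kernel-verified Lean document; each statement's English description precedes it below -/
import Mathlib

section
/- If w is a nonempty freely reduced word in a free group F, then for every r ∈ F we have r⁻¹ w⁻¹ r ≠ w. -/
namespace FreeGroupConjAux

open FreeGroup List

variable {α : Type*}

/-- A word is (freely) reduced: no adjacent pair `(a, b), (a, !b)`. -/
def Red' (l : List (α × Bool)) : Prop :=
  l.Chain' fun p q => q ≠ (p.1, !p.2)

lemma flipw_flipw (p : α × Bool) : ((p.1, !p.2).1, !(p.1, !p.2).2) = p := by
  simp

lemma invRev_cons (a : α × Bool) (l : List (α × Bool)) :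
    invRev (a :: l) = invRev l ++ [(a.1, !a.2)] := by
  simp [invRev]

lemma invRev_append' (l t : List (α × Bool)) :
    invRev (l ++ t) = invRev t ++ invRev l := by
  simp [invRev]

lemma invRev_singleton (a : α × Bool) : invRev [a] = [(a.1, !a.2)] := by
  simp [invRev]

lemma conj_single (a : α) (b : Bool) (m : List (α × Bool)) :
    (mk [(a, b)])⁻¹ * mk m * mk [(a, b)] = mk ((a, !b) :: (m ++ [(a, b)])) := by
  rw [inv_mk, invRev_singleton, mul_mk, mul_mk]
  exact congrArg mk (by simp)

lemma Red'.infix {l l' : List (α × Bool)} (h : Red' l) (h' : l' <:+: l) : Red' l' :=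
  List.IsChain.infix h h'

lemma Red'.invRev {l : List (α × Bool)} (h : Red' l) : Red' (FreeGroup.invRev l) := by
  unfold Red' FreeGroup.invRev List.Chain'
  rw [List.isChain_reverse]
  rw [List.isChain_map]
  refine h.imp ?_
  intro p q hpq hcon
  apply hpq
  simp only [Bool.not_not, Prod.mk.eta] at hcon
  exact hcon.symm

lemma reduce_eq_self_of [DecidableEq α] {l : List (α × Bool)} (h : Red' l) :
    reduce l = l := by
  induction l with
  | nil => rfl
  | cons x l ih =>
    rcases List.isChain_cons.1 h with ⟨hx, hl⟩
    rw [reduce.cons, ih hl]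
    cases l with
    | nil => rfl
    | cons y t =>
      have hcond : ¬(x.1 = y.1 ∧ x.2 = !y.2) := by
        rintro ⟨h1, h2⟩
        exact hx y rfl (by rw [Prod.ext_iff]; constructor <;> simp [h1, h2])
      simp [hcond]

lemma red'_of_reduce [DecidableEq α] {l : List (α × Bool)} (h : reduce l = l) :
    Red' l := by
  induction l with
  | nil => exact List.isChain_nil
  | cons x l ih =>
    rw [reduce.cons] at h
    rcases ht : reduce l with _ | ⟨y, ys⟩ <;> rw [ht] at h <;> dsimp only at h
    · simp at h
      subst h
      exact List.isChain_singleton x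
    · by_cases hcond : x.1 = y.1 ∧ x.2 = !y.2
      · rw [if_pos hcond] at h
        exfalso
        have h1 : ys.length + 1 ≤ l.length := by
          have := FreeGroup.Red.length_le (L₁ := l) (L₂ := reduce l) reduce.red
          rw [ht] at this
          simpa using this
        have h2 := congrArg List.length h
        simp at h2
        omega
      · rw [if_neg hcond] at h
        have hl : l = y :: ys := by
          have h3 : y :: ys = l := by
            have := congrArg List.tail h
            simpa using this
          exact h3.symm
        have hred : reduce l = l := by rw [ht, hl]
        refine List.isChain_cons.2 ⟨?_, ih hred⟩
        intro z hz hcon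
        rw [hl] at hz
        simp at hz
        subst hz
        apply hcond
        refine ⟨(congrArg Prod.fst hcon).symm, ?_⟩
        have h2 := congrArg Prod.snd hcon
        simp only at h2
        rw [h2]
        simp

lemma toWord_mk_eq [DecidableEq α] {l : List (α × Bool)} (h : Red' l) :
    (mk l).toWord = l := by
  rw [toWord_mk, reduce_eq_self_of h]

lemma red'_toWord [DecidableEq α] (x : FreeGroup α) : Red' x.toWord :=
  red'_of_reduce (reduce_toWord x)

lemma mk_inj [DecidableEq α] {l l' : List (α × Bool)} (h : Red' l) (h' : Red' l')
    (he : mk l = mk l') : l = l' := by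
  have := congrArg toWord he
  rwa [toWord_mk_eq h, toWord_mk_eq h'] at this

/-- A reduced word equal to its own formal inverse is empty. -/
lemma eq_nil_of_invRev_eq_self :
    ∀ (n : ℕ) (l : List (α × Bool)), l.length ≤ n → Red' l → invRev l = l → l = [] := by
  intro n
  induction n with
  | zero => intro l hl _ _; exact List.length_eq_zero_iff.1 (Nat.le_zero.1 hl)
  | succ n ih =>
    intro l hl hred hinv
    rcases l with _ | ⟨x, t⟩
    · rfl
    by_cases htne : t = []
    · subst htne
      rw [invRev_singleton] at hinv
      have hx2 := congrArg Prod.snd (List.cons_eq_cons.1 hinv).1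
      simp at hx2
    exfalso
    obtain ⟨m, q, hdec⟩ : ∃ m q, t = m ++ [q] :=
      ⟨t.dropLast, t.getLast htne, (List.dropLast_append_getLast htne).symm⟩
    subst hdec
    have hinv2 : (q.1, !q.2) :: (invRev m ++ [(x.1, !x.2)]) = x :: (m ++ [q]) := by
      rw [← hinv]
      simp [invRev]
    obtain ⟨hx, htail⟩ := List.cons_eq_cons.1 hinv2
    have hsplit := List.append_inj htail (by simp)
    have hminv : invRev m = m := hsplit.1
    have hredm : Red' m := hred.infix ⟨[x], [q], by simp⟩
    have hmnil : m = [] := ih m (by simp at hl; omega) hredm hminv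
    subst hmnil
    have hred2 : Red' [x, q] := by simpa [Red'] using hred
    have hpair : q ≠ (x.1, !x.2) := (List.isChain_cons_cons.1 hred2).1
    apply hpair
    rw [← hx]; simp

/-- From `Red' (v ++ v)` we get `Red' (v ++ v ++ v)`. -/
lemma red'_triple {v : List (α × Bool)} (h : Red' (v ++ v)) : Red' (v ++ (v ++ v)) := by
  have h1 : Red' v := h.infix ⟨[], v, by simp⟩
  rcases List.isChain_append.1 h with ⟨_, _, hj⟩
  refine List.isChain_append.2 ⟨h1, h, ?_⟩
  intro x hx y hy
  rcases v with _ | ⟨a, t⟩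
  · simp at hx
  · apply hj x hx
    simpa using hy

/-- Rotations of cyclically reduced words are cyclically reduced. -/
lemma red'_rotate {v : List (α × Bool)} (h : Red' (v ++ v)) (n : ℕ) :
    Red' (v.rotate n ++ v.rotate n) := by
  rcases v with _ | ⟨a, t⟩
  · simpa using h
  set v := a :: t with hv
  have hvne : v ≠ [] := by simp [hv]
  have hpos : 0 < v.length := List.length_pos_iff.2 hvne
  set k := n % v.length with hk
  have hkle : k ≤ v.length := le_of_lt (Nat.mod_lt _ hpos)
  have hrot : v.rotate n = v.drop k ++ v.take k := by
    rw [← List.rotate_mod, List.rotate_eq_drop_append_take hkle]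
  have h3 := red'_triple h
  obtain ⟨t, d, h1, htd⟩ : ∃ t d, v.rotate n = d ++ t ∧ t ++ d = v :=
    ⟨v.take k, v.drop k, hrot, List.take_append_drop _ _⟩
  rw [h1]
  refine h3.infix ⟨t, d, ?_⟩
  calc t ++ (d ++ t ++ (d ++ t)) ++ d
      = (t ++ d) ++ ((t ++ d) ++ (t ++ d)) := by simp [List.append_assoc]
    _ = v ++ (v ++ v) := by rw [htd]

lemma red'_isRotated {v v' : List (α × Bool)} (h : Red' (v ++ v)) (hr : v ~r v') :
    Red' (v' ++ v') := by
  rcases hr with ⟨n, rfl⟩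
  exact red'_rotate h n

/-- Key lemma: conjugating a "reduced conjugate normal form" `c ++ v ++ invRev c`
(with `v` cyclically reduced) by any word gives, if the result is cyclically
reduced, a rotation of `v`. -/
lemma key [DecidableEq α] :
    ∀ (rl : List (α × Bool)) (c v u : List (α × Bool)),
      Red' (c ++ v ++ invRev c) → Red' (v ++ v) → v ≠ [] → Red' (u ++ u) →
      (mk rl)⁻¹ * mk (c ++ v ++ invRev c) * mk rl = mk u → v ~r u := by
  intro rl
  induction rl with
  | nil =>
    intro c v u hm hv hvne hu heq
    have h1 : mk (c ++ v ++ invRev c) = mk u := by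
      simpa [← one_eq_mk] using heq
    have hu' : Red' u := hu.infix ⟨[], u, by simp⟩
    have h2 : c ++ v ++ invRev c = u := mk_inj hm hu' h1
    rcases c with _ | ⟨q, c'⟩
    · rw [← h2]
      simpa using IsRotated.refl v
    · exfalso
      rcases List.isChain_append.1 hu with ⟨_, _, hj⟩
      have hhead : u.head? = some q := by rw [← h2]; simp
      have hlast : u.getLast? = some (q.1, !q.2) := by
        rw [← h2, invRev_cons]
        rw [List.append_assoc, List.getLast?_append_of_ne_nil _ (by simp),
          List.getLast?_append_of_ne_nil _ (by simp)]
        simp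
      exact hj _ hlast _ hhead (by rw [flipw_flipw])
  | cons p rl' ih =>
    intro c v u hm hv hvne hu heq
    obtain ⟨a, b⟩ := p
    set g : FreeGroup α := mk [(a, b)] with hg
    have hginv : g⁻¹ = mk [(a, !b)] := by
      rw [hg, inv_mk, invRev_singleton]
    have heq' : (mk rl')⁻¹ * (g⁻¹ * mk (c ++ v ++ invRev c) * g) * mk rl' = mk u := by
      have : mk ((a, b) :: rl') = g * mk rl' := by rw [hg, mul_mk]; rfl
      rw [this, mul_inv_rev] at heq
      rw [← heq]
      group
    -- case analysis
    rcases c with _ | ⟨q, c'⟩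
    · -- c = []
      have hmv : ([] : List (α × Bool)) ++ v ++ invRev [] = v := by simp
      rw [hmv] at hm heq'
      by_cases hh : v.head? = some (a, b)
      · -- rotate forward
        rcases v with _ | ⟨x, v'⟩
        · exact absurd rfl hvne
        have hx : x = (a, b) := by simpa using hh
        subst hx
        have hrot : (a, b) :: v' ~r v' ++ [(a, b)] :=
          ⟨1, by rw [List.rotate_cons_succ, List.rotate_zero]⟩
        have hv2 : Red' ((v' ++ [(a, b)]) ++ (v' ++ [(a, b)])) := red'_isRotated hv hrot
        have heq2 : (mk rl')⁻¹ * mk ([] ++ (v' ++ [(a, b)]) ++ invRev []) * mk rl' = mk u := by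
          have hgv : g⁻¹ * mk ((a, b) :: v') * g = mk (v' ++ [(a, b)]) := by
            have h1 : mk ((a, b) :: v') = g * mk v' := by
              rw [hg, mul_mk]
              exact congrArg mk (by simp)
            rw [h1, ← mul_mk, ← hg]
            group
          rw [hgv] at heq'
          simpa using heq'
        have hm2 : Red' (([] : List (α × Bool)) ++ (v' ++ [(a, b)]) ++ invRev []) := by
          simpa using hv2.infix ⟨[], v' ++ [(a, b)], by simp⟩
        have := ih [] (v' ++ [(a, b)]) u hm2 hv2 (by simp) hu heq2
        exact hrot.trans this
      · by_cases hl : v.getLast? = some (a, !b)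
        · -- rotate backward
          have hqv : v.getLast hvne = (a, !b) := by
            have h1 : v.getLast? = some (v.getLast hvne) :=
              List.getLast?_eq_getLast_of_ne_nil hvne
            exact Option.some_inj.1 (h1.symm.trans hl)
          have hdec : v = v.dropLast ++ [(a, !b)] := by
            conv_lhs => rw [← List.dropLast_append_getLast hvne, hqv]
          have hrot : ((a, !b) :: v.dropLast) ~r v :=
            ⟨1, by rw [List.rotate_cons_succ, List.rotate_zero, ← hdec]⟩
          have hrot' : v ~r ((a, !b) :: v.dropLast) := hrot.symm
          have hv2 : Red' (((a, !b) :: v.dropLast) ++ ((a, !b) :: v.dropLast)) :=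
            red'_isRotated hv hrot'
          have heq2 : (mk rl')⁻¹ * mk ([] ++ ((a, !b) :: v.dropLast) ++ invRev []) * mk rl'
              = mk u := by
            have hgv : g⁻¹ * mk v * g = mk ((a, !b) :: v.dropLast) := by
              have h2 : mk ((a, !b) :: v.dropLast) = g⁻¹ * mk v.dropLast := by
                rw [hginv, mul_mk]
                exact congrArg mk (by simp)
              conv_lhs => rw [hdec]
              rw [← mul_mk, h2, ← hginv]
              group
            rw [hgv] at heq'
            simpa using heq'
          have hm2 : Red' (([] : List (α × Bool)) ++ ((a, !b) :: v.dropLast) ++ invRev []) := by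
            simpa using hv2.infix ⟨[], (a, !b) :: v.dropLast, by simp⟩
          have := ih [] ((a, !b) :: v.dropLast) u hm2 hv2 (by simp) hu heq2
          exact hrot'.trans this
        · -- push: new c = [(a, !b)]
          have hdecm : (a, !b) :: (v ++ [(a, b)]) = [(a, !b)] ++ v ++ invRev [(a, !b)] := by
            rw [invRev_singleton]
            simp
          have hm2 : Red' ([(a, !b)] ++ v ++ invRev [(a, !b)]) := by
            rw [← hdecm]
            refine List.isChain_cons.2 ⟨?_, ?_⟩
            · intro y hy hcon
              simp only [Bool.not_not] at hcon
              have h1 : (v ++ [(a, b)]).head? = v.head? :=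
                List.head?_append_of_ne_nil _ hvne
              have h2 : v.head? = some y := by rw [← h1]; exact Option.mem_def.1 hy
              exact hh (by rw [h2, hcon])
            · refine List.isChain_append.2 ⟨hm, List.isChain_singleton _, ?_⟩
              intro x hx y hy hcon
              simp at hy
              subst hy
              apply hl
              have hx' : v.getLast? = some x := hx
              have hxab : x = (a, !b) := by
                have h1 : (a : α) = x.1 := congrArg Prod.fst hcon
                have h2 : (b : Bool) = !x.2 := congrArg Prod.snd hcon
                have h3 : x.2 = !b := by rw [h2]; simp
                rw [Prod.ext_iff]
                exact ⟨h1.symm, h3⟩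
              rw [hx', hxab]
          have heq2 : (mk rl')⁻¹ * mk ([(a, !b)] ++ v ++ invRev [(a, !b)]) * mk rl' = mk u := by
            rw [← hdecm, ← conj_single a b v, ← hg]
            exact heq'
          exact ih [(a, !b)] v u hm2 hv hvne hu heq2
    · -- c = q :: c'
      by_cases hq : q = (a, b)
      · -- peel
        subst hq
        have hdecm : (a, b) :: c' ++ v ++ invRev ((a, b) :: c')
            = [(a, b)] ++ (c' ++ v ++ invRev c') ++ [(a, !b)] := by
          rw [invRev_cons]
          simp [List.append_assoc]
        have hm2 : Red' (c' ++ v ++ invRev c') := by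
          refine hm.infix ⟨[(a, b)], [(a, !b)], ?_⟩
          exact hdecm.symm
        have hmkdec : mk ((a, b) :: c' ++ v ++ invRev ((a, b) :: c'))
            = g * mk (c' ++ v ++ invRev c') * g⁻¹ := by
          rw [hdecm, ← mul_mk, ← mul_mk, hginv, hg]
        have heq2 : (mk rl')⁻¹ * mk (c' ++ v ++ invRev c') * mk rl' = mk u := by
          rw [hmkdec] at heq'
          rw [← heq']
          group
        exact ih c' v u hm2 hv hvne hu heq2
      · -- push: new c = (a, !b) :: q :: c'
        have hmne : (q :: c' ++ v ++ invRev (q :: c')) ≠ [] := by simp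
        have hhead : (q :: c' ++ v ++ invRev (q :: c')).head? = some q := by simp
        have hlastm : (q :: c' ++ v ++ invRev (q :: c')).getLast? = some (q.1, !q.2) := by
          rw [invRev_cons, List.append_assoc,
            List.getLast?_append_of_ne_nil _ (by simp),
            List.getLast?_append_of_ne_nil _ (by simp)]
          simp
        have hdecm : (a, !b) :: ((q :: c' ++ v ++ invRev (q :: c')) ++ [(a, b)])
            = (a, !b) :: q :: c' ++ v ++ invRev ((a, !b) :: q :: c') := by
          simp [invRev_cons, List.append_assoc]
        have hm2 : Red' ((a, !b) :: q :: c' ++ v ++ invRev ((a, !b) :: q :: c')) := by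
          rw [← hdecm]
          refine List.isChain_cons.2 ⟨?_, ?_⟩
          · intro y hy hcon
            rw [List.head?_append_of_ne_nil _ hmne, hhead] at hy
            simp at hy
            subst hy
            simp only [Bool.not_not] at hcon
            exact hq hcon
          · refine List.isChain_append.2 ⟨hm, List.isChain_singleton _, ?_⟩
            intro x hx y hy hcon
            simp at hy
            subst hy
            rw [hlastm] at hx
            simp at hx
            subst hx
            have hxq : q = (a, b) := by
              have h1 := congrArg Prod.fst hcon
              have h2 := congrArg Prod.snd hcon
              simp at h1 h2
              rw [Prod.ext_iff]
              exact ⟨h1.symm, h2.symm⟩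
            exact hq hxq
        have heq2 : (mk rl')⁻¹ * mk ((a, !b) :: q :: c' ++ v ++ invRev ((a, !b) :: q :: c'))
            * mk rl' = mk u := by
          rw [← hdecm, ← conj_single a b (q :: c' ++ v ++ invRev (q :: c')), ← hg]
          exact heq'
        exact ih ((a, !b) :: q :: c') v u hm2 hv hvne hu heq2

/-- A nonempty cyclically reduced word is not a rotation of its formal inverse. -/
lemma not_rot {W : List (α × Bool)} (hW : Red' (W ++ W)) (hne : W ≠ []) :
    ¬ (invRev W ~r W) := by
  rintro ⟨n, hn⟩
  have hWred : Red' W := hW.infix ⟨[], W, by simp⟩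
  have hWinv : Red' (invRev W) := hWred.invRev
  have hpos : 0 < (invRev W).length := by
    rw [invRev_length]
    exact List.length_pos_iff.2 hne
  set k := n % (invRev W).length with hk
  have hkle : k ≤ (invRev W).length := le_of_lt (Nat.mod_lt _ hpos)
  have hrot : (invRev W).rotate n = (invRev W).drop k ++ (invRev W).take k := by
    rw [← List.rotate_mod, List.rotate_eq_drop_append_take hkle]
  set A := (invRev W).take k with hA
  set B := (invRev W).drop k with hB
  have hW1 : W = B ++ A := by rw [← hn, hrot]
  have hW2 : invRev W = A ++ B := (List.take_append_drop _ _).symm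
  have hW3 : A ++ B = invRev A ++ invRev B := by
    rw [← hW2, hW1, invRev_append']
  have hlen : A.length = (invRev A).length := invRev_length.symm
  have hsplit := List.append_inj hW3 hlen
  have hAred : Red' A := hWinv.infix ⟨[], B, by rw [hW2]; simp⟩
  have hBred : Red' B := hWinv.infix ⟨A, [], by rw [hW2]; simp⟩
  have hAnil : A = [] := eq_nil_of_invRev_eq_self A.length A le_rfl hAred hsplit.1.symm
  have hBnil : B = [] := eq_nil_of_invRev_eq_self B.length B le_rfl hBred hsplit.2.symm
  apply hne
  rw [hW1, hAnil, hBnil]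
  rfl

lemma main [DecidableEq α] :
    ∀ (n : ℕ) (w : FreeGroup α), w.toWord.length ≤ n → w ≠ 1 →
      ∀ r : FreeGroup α, r⁻¹ * w⁻¹ * r ≠ w := by
  intro n
  induction n with
  | zero =>
    intro w hw hne r
    exfalso
    apply hne
    rw [← toWord_eq_nil_iff]
    exact List.length_eq_zero_iff.1 (Nat.le_zero.1 hw)
  | succ n ih =>
    intro w hlen hne r heq
    set W := w.toWord with hWdef
    have hWred : Red' W := red'_toWord w
    have hWne : W ≠ [] := fun hcon => hne (toWord_eq_nil_iff.1 hcon)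
    have hwW : mk W = w := mk_toWord
    by_cases hc : Red' (W ++ W)
    · -- cyclically reduced case
      have hvred : Red' (FreeGroup.invRev W ++ FreeGroup.invRev W) := by
        have := hc.invRev
        rwa [invRev_append'] at this
      have hvne : FreeGroup.invRev W ≠ [] := by
        intro hcon
        apply hWne
        have := congrArg FreeGroup.invRev hcon
        rwa [invRev_invRev] at this
      have hmred : Red' (([] : List (α × Bool)) ++ FreeGroup.invRev W ++ invRev []) := by
        simpa using hvred.infix ⟨[], FreeGroup.invRev W, by simp⟩
      have heqk : (mk r.toWord)⁻¹ * mk (([] : List (α × Bool)) ++ FreeGroup.invRev W ++ invRev [])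
          * mk r.toWord = mk W := by
        have h1 : mk (([] : List (α × Bool)) ++ FreeGroup.invRev W ++ invRev [])
            = mk (FreeGroup.invRev W) := by simp
        rw [h1, ← inv_mk, hwW, mk_toWord]
        exact heq
      have hrot := key r.toWord [] (FreeGroup.invRev W) W hmred hvred hvne hc heqk
      exact not_rot hc hWne hrot
    · -- not cyclically reduced: peel a letter and recurse
      have hjfail : ¬ ∀ x ∈ W.getLast?, ∀ y ∈ W.head?, y ≠ (x.1, !x.2) := by
        intro hj
        exact hc (List.isChain_append.2 ⟨hWred, hWred, hj⟩)
      push_neg at hjfail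
      obtain ⟨x, hxlast, y, hyhead, hyx⟩ := hjfail
      rcases W with _ | ⟨p, t⟩
      · exact hWne rfl
      obtain rfl : p = y := by simpa using hyhead
      by_cases htnil : t = []
      · exfalso
        subst htnil
        have hxy : p = x := by simpa using hxlast
        subst hxy
        have hsnd := congrArg Prod.snd hyx
        simp at hsnd
      obtain ⟨m, q, rfl⟩ : ∃ m q, t = m ++ [q] :=
        ⟨t.dropLast, t.getLast htnil, (List.dropLast_append_getLast htnil).symm⟩
      obtain rfl : q = x := by
        have h1 : (p :: (m ++ [q])).getLast? = some q := by
          rw [show p :: (m ++ [q]) = (p :: m) ++ [q] by simp, List.getLast?_concat]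
        rw [h1] at hxlast
        exact Option.some_inj.1 (Option.mem_def.1 hxlast)
      have hmne : m ≠ [] := by
        rintro rfl
        have hred2 : Red' [p, q] := by simpa [Red'] using hWred
        exact (List.isChain_cons_cons.1 hred2).1 (by rw [hyx]; exact (flipw_flipw q).symm)
      have hmred : Red' m := hWred.infix ⟨[p], [q], by simp⟩
      have hqg : mk [q] = (mk [p] : FreeGroup α)⁻¹ := by
        rw [inv_mk, invRev_singleton]
        exact congrArg mk (by rw [hyx, flipw_flipw])
      have hwdec : w = mk [p] * mk m * (mk [p])⁻¹ := by
        rw [← hwW, show p :: (m ++ [q]) = [p] ++ m ++ [q] by simp, ← mul_mk, ← mul_mk, hqg]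
      have hw₀W : (mk m : FreeGroup α).toWord = m := toWord_mk_eq hmred
      have hw₀ne : (mk m : FreeGroup α) ≠ 1 := by
        intro hcon
        apply hmne
        rw [← hw₀W, hcon, toWord_one]
      have hmlen : (mk m : FreeGroup α).toWord.length ≤ n := by
        rw [hw₀W]
        have h2 : (p :: (m ++ [q])).length ≤ n + 1 := hlen
        simp at h2
        omega
      apply ih (mk m) hmlen hw₀ne ((mk [p])⁻¹ * r * mk [p])
      have hstep : ((mk [p])⁻¹ * r * mk [p])⁻¹ * (mk m : FreeGroup α)⁻¹ * ((mk [p])⁻¹ * r * mk [p])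
          = (mk [p])⁻¹ * (r⁻¹ * w⁻¹ * r) * mk [p] := by
        rw [hwdec]
        group
      rw [hstep, heq, hwdec]
      group

end FreeGroupConjAux

/-- In a free group, no nontrivial element is conjugate to its own inverse. -/
theorem freeGroup_not_conj_inv {α : Type*} (w : FreeGroup α) (h : w ≠ 1) :
    ∀ r : FreeGroup α, r⁻¹ * w⁻¹ * r ≠ w := by
  classical
  exact fun r => FreeGroupConjAux.main w.toWord.length w le_rfl h r
end

section
/- The number of reduced and cyclically reduced words of length ℓ ≥ 1 in the free group of rank g equals (2g−1)^ℓ + 1 if ℓ is odd, and (2g−1)^ℓ + (2g−1) if ℓ is even. -/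
/-- `a` and `b` are mutually inverse letters. -/
def IsInvPair {α : Type*} (a b : α × Bool) : Prop := a.1 = b.1 ∧ a.2 = !b.2

/-- A word is freely reduced if no two adjacent letters are mutually inverse. -/
def FreelyRed {α : Type*} (l : List (α × Bool)) : Prop :=
  l.Chain' fun a b => ¬ IsInvPair a b

/-- A word is cyclically reduced (given free reduction) if its first and last
letters are not mutually inverse. -/
def CyclRedWord {α : Type*} (l : List (α × Bool)) : Prop :=
  ∀ a b, l.head? = some a → l.getLast? = some b → ¬ IsInvPair a b

/-!
Let `r n` and `c n` count the reduced and the cyclically reduced words of length `n`, and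
`t = 2g - 1`. Appending a letter to a reduced word keeps it reduced unless the letter cancels
the last one, so `r n = 2g t^(n-1)`. For a map `φ` on letters, appending `φ` of the first
letter is a bijection from the reduced words `u` of length `n ≥ 1` with
`last u ≠ (φ (first u))⁻¹` onto the reduced words of length `n + 1` whose last letter is
`φ` of their first. With `φ = id` and `φ = ⁻¹` this gives
`c (n + 2) + r (n + 1) = r (n + 2) + c n`, and `c 1 = r 1`, `c 2 = r 2` start the recursion.
-/

open Finset

section Letters

variable {α : Type*}

def invLetter (a : α × Bool) : α × Bool := (a.1, !a.2)

@[simp] lemma invLetter_invLetter (a : α × Bool) : invLetter (invLetter a) = a := by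
  simp [invLetter]

@[simp] lemma invLetter_comp_invLetter : invLetter ∘ invLetter = (id : α × Bool → α × Bool) :=
  funext invLetter_invLetter

lemma invLetter_ne_self (a : α × Bool) : invLetter a ≠ a := by
  simp [invLetter, Prod.ext_iff]

lemma isInvPair_iff {a b : α × Bool} : IsInvPair a b ↔ invLetter a = b := by
  obtain ⟨a, s⟩ := a
  obtain ⟨b, t⟩ := b
  cases s <;> cases t <;> simp [IsInvPair, invLetter, eq_comm]

lemma freelyRed_iff_isChain {l : List (α × Bool)} :
    FreelyRed l ↔ l.IsChain fun a b => ¬IsInvPair a b :=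
  Iff.rfl

lemma freelyRed_append_singleton {l : List (α × Bool)} {x : α × Bool} :
    FreelyRed (l ++ [x]) ↔ FreelyRed l ∧ l.getLast?.map invLetter ≠ some x := by
  simp [freelyRed_iff_isChain, List.isChain_append, isInvPair_iff]

lemma cyclRedWord_iff {l : List (α × Bool)} (hl : l ≠ []) :
    CyclRedWord l ↔ l.getLast? ≠ l.head?.map invLetter := by
  obtain ⟨a, t, rfl⟩ := List.exists_cons_of_ne_nil hl
  simp only [CyclRedWord, List.getLast?_eq_some_getLast (List.cons_ne_nil a t), isInvPair_iff]
  simp [ne_comm]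

end Letters

section Words

variable (α : Type*) [Fintype α] [DecidableEq α]

instance : DecidablePred (FreelyRed (α := α)) := fun _ => by
  rw [freelyRed_iff_isChain]; unfold IsInvPair; infer_instance

def reducedWords (n : ℕ) : Finset (List (α × Bool)) :=
  {l ∈ (univ : Finset (List.Vector (α × Bool) n)).image List.Vector.toList | FreelyRed l}

variable {α}

lemma mem_reducedWords {n : ℕ} {l : List (α × Bool)} :
    l ∈ reducedWords α n ↔ l.length = n ∧ FreelyRed l := by
  simp only [reducedWords, mem_filter, mem_image, mem_univ, true_and]
  constructor
  · rintro ⟨⟨v, rfl⟩, h⟩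
    exact ⟨v.2, h⟩
  · rintro ⟨rfl, h⟩
    exact ⟨⟨⟨l, rfl⟩, rfl⟩, h⟩

lemma reducedWords_zero : reducedWords α 0 = {[]} := by
  ext l
  simp only [mem_reducedWords, List.length_eq_zero_iff, mem_singleton, and_iff_left_iff_imp]
  rintro rfl
  exact List.isChain_nil

lemma card_filter_reducedWords_succ (P : List (α × Bool) → Prop) [DecidablePred P] (n : ℕ) :
    #{w ∈ reducedWords α (n + 1) | P w} =
      ∑ u ∈ reducedWords α n, #{x | u.getLast?.map invLetter ≠ some x ∧ P (u ++ [x])} := by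
  rw [← card_sigma]
  symm
  apply card_bij (fun p _ => p.1 ++ [p.2])
  · rintro ⟨u, x⟩ h
    simp only [mem_sigma, mem_filter, mem_univ, true_and, mem_reducedWords] at h ⊢
    exact ⟨⟨by simp [h.1.1], freelyRed_append_singleton.2 ⟨h.1.2, h.2.1⟩⟩, h.2.2⟩
  · rintro ⟨u, x⟩ - ⟨v, y⟩ - h
    obtain ⟨rfl, hxy⟩ := List.append_inj' h rfl
    cases List.singleton_inj.1 hxy
    rfl
  · intro w hw
    simp only [mem_filter, mem_reducedWords] at hw
    obtain ⟨⟨hlen, hred⟩, hP⟩ := hw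
    have hne : w ≠ [] := by rintro rfl; simp at hlen
    rw [← List.dropLast_append_getLast hne] at hred hP
    rw [freelyRed_append_singleton] at hred
    refine ⟨⟨w.dropLast, w.getLast hne⟩, ?_, List.dropLast_append_getLast hne⟩
    simp only [mem_sigma, mem_filter, mem_univ, true_and, mem_reducedWords, List.length_dropLast]
    exact ⟨⟨by omega, hred.1⟩, hred.2, hP⟩

lemma card_filter_reducedWords_one (P : List (α × Bool) → Prop) [DecidablePred P] :
    #{w ∈ reducedWords α 1 | P w} = #{x | P [x]} := by
  simp [card_filter_reducedWords_succ, reducedWords_zero]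

lemma card_reducedWords_succ {n : ℕ} (hn : 1 ≤ n) :
    #(reducedWords α (n + 1)) = #(reducedWords α n) * (2 * Fintype.card α - 1) := by
  have h := card_filter_reducedWords_succ (fun _ : List (α × Bool) => True) n
  simp only [filter_true, and_true] at h
  rw [h]
  refine sum_const_nat fun u hu => ?_
  obtain ⟨b, hb⟩ : ∃ b, u.getLast? = some b := by
    rw [mem_reducedWords] at hu
    exact ⟨_, List.getLast?_eq_some_getLast (List.ne_nil_of_length_pos (by omega))⟩
  simp only [hb, Option.map_some, ne_eq, Option.some.injEq]
  rw [filter_ne, card_erase_of_mem (mem_univ _), card_univ, Fintype.card_prod, Fintype.card_bool,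
    mul_comm]

lemma card_reducedWords {n : ℕ} (hn : 1 ≤ n) :
    #(reducedWords α n) = 2 * Fintype.card α * (2 * Fintype.card α - 1) ^ (n - 1) := by
  induction n, hn using Nat.le_induction with
  | base =>
    have h := card_filter_reducedWords_one (fun _ : List (α × Bool) => True)
    simpa [card_univ, mul_comm] using h
  | succ n hn ih =>
    rw [card_reducedWords_succ hn, ih, mul_assoc, ← pow_succ, Nat.sub_add_cancel hn,
      Nat.add_sub_cancel]

lemma card_filter_getLast?_eq_succ_add (φ : α × Bool → α × Bool) {n : ℕ} (hn : 1 ≤ n) :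
    #{w ∈ reducedWords α (n + 1) | w.getLast? = w.head?.map φ} +
      #{u ∈ reducedWords α n | u.getLast? = u.head?.map (invLetter ∘ φ)} =
      #(reducedWords α n) := by
  suffices h : #{w ∈ reducedWords α (n + 1) | w.getLast? = w.head?.map φ} =
      #{u ∈ reducedWords α n | ¬u.getLast? = u.head?.map (invLetter ∘ φ)} by
    rw [h, add_comm, card_filter_add_card_filter_not]
  rw [card_filter_reducedWords_succ, card_filter]
  refine sum_congr rfl fun u hu => ?_
  have hne : u ≠ [] := List.ne_nil_of_length_pos (by rw [(mem_reducedWords.1 hu).1]; omega)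
  simp only [List.getLast?_eq_some_getLast hne, List.head?_eq_some_head hne, List.getLast?_concat,
    List.head?_append, Option.some_or, Option.map_some, ne_eq, Option.some.injEq,
    Function.comp_apply]
  split_ifs with h
  · rw [card_eq_zero, filter_eq_empty_iff]
    rintro x - ⟨hx, rfl⟩
    simp [h] at hx
  · rw [card_eq_one]
    refine ⟨φ (u.head hne), ?_⟩
    ext x
    simp only [mem_filter, mem_univ, true_and, mem_singleton, and_iff_right_iff_imp]
    rintro rfl heq
    exact h (by rw [← heq, invLetter_invLetter])

variable (α) in
def cyclicallyReducedWords (n : ℕ) : Finset (List (α × Bool)) :=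
  {w ∈ reducedWords α n | w.getLast? ≠ w.head?.map invLetter}

lemma coe_cyclicallyReducedWords {n : ℕ} (hn : 1 ≤ n) :
    (cyclicallyReducedWords α n : Set (List (α × Bool))) =
      {l | l.length = n ∧ FreelyRed l ∧ CyclRedWord l} := by
  ext l
  simp only [cyclicallyReducedWords, coe_filter, mem_reducedWords, Set.mem_ofPred_eq, and_assoc]
  refine and_congr_right fun hl => and_congr_right fun _ => (cyclRedWord_iff ?_).symm
  exact List.ne_nil_of_length_pos (by omega)

lemma card_filter_getLast?_eq_add_card_cyclicallyReducedWords (n : ℕ) :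
    #{w ∈ reducedWords α n | w.getLast? = w.head?.map invLetter} +
      #(cyclicallyReducedWords α n) = #(reducedWords α n) :=
  card_filter_add_card_filter_not _

lemma card_cyclicallyReducedWords_add_two {n : ℕ} (hn : 1 ≤ n) :
    #(cyclicallyReducedWords α (n + 2)) + #(reducedWords α (n + 1)) =
      #(reducedWords α (n + 2)) + #(cyclicallyReducedWords α n) := by
  have h₁ := card_filter_getLast?_eq_add_card_cyclicallyReducedWords (α := α) (n + 2)
  have h₂ := card_filter_getLast?_eq_add_card_cyclicallyReducedWords (α := α) n
  have h₃ := card_filter_getLast?_eq_succ_add (α := α) invLetter (n := n + 1) (by omega)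
  have h₄ := card_filter_getLast?_eq_succ_add (α := α) id hn
  simp only [invLetter_comp_invLetter, Function.comp_id, Option.map_id, id_eq,
    add_assoc, Nat.reduceAdd] at h₃ h₄
  omega

lemma card_filter_getLast?_eq_one (φ : α × Bool → α × Bool) :
    #{w ∈ reducedWords α 1 | w.getLast? = w.head?.map φ} = #{x | x = φ x} := by
  simp [card_filter_reducedWords_one]

lemma card_cyclicallyReducedWords_one : #(cyclicallyReducedWords α 1) = #(reducedWords α 1) := by
  have h := card_filter_getLast?_eq_add_card_cyclicallyReducedWords (α := α) 1
  rw [card_filter_getLast?_eq_one, filter_false_of_mem fun x _ hx => invLetter_ne_self x hx.symm,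
    card_empty, zero_add] at h
  exact h

lemma card_cyclicallyReducedWords_two : #(cyclicallyReducedWords α 2) = #(reducedWords α 2) := by
  have h₁ := card_filter_getLast?_eq_add_card_cyclicallyReducedWords (α := α) 2
  have h₂ := card_filter_getLast?_eq_succ_add (α := α) invLetter le_rfl
  have h₃ := card_filter_reducedWords_one fun _ : List (α × Bool) => True
  rw [card_filter_getLast?_eq_one, invLetter_comp_invLetter] at h₂
  simp only [filter_true, id_eq, Nat.reduceAdd] at h₂ h₃
  omega

lemma card_cyclicallyReducedWords [Nonempty α] {n : ℕ} (hn : 1 ≤ n) :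
    #(cyclicallyReducedWords α n) =
      if Odd n then (2 * Fintype.card α - 1) ^ n + 1
      else (2 * Fintype.card α - 1) ^ n + (2 * Fintype.card α - 1) := by
  obtain ⟨t, ht⟩ : ∃ t, 2 * Fintype.card α = t + 1 :=
    ⟨_, (Nat.sub_add_cancel (by have := Fintype.card_pos (α := α); omega)).symm⟩
  have hr (k : ℕ) : #(reducedWords α (k + 1)) = t ^ (k + 1) + t ^ k := by
    rw [card_reducedWords (by omega), ht, Nat.add_sub_cancel, Nat.add_sub_cancel, pow_succ]
    ring
  rw [ht, Nat.add_sub_cancel]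
  obtain ⟨n, rfl⟩ := Nat.exists_eq_add_of_le' hn
  clear hn
  induction n using Nat.twoStepInduction with
  | zero => simp [card_cyclicallyReducedWords_one, hr]
  | one => simp [card_cyclicallyReducedWords_two, hr]
  | more n ih _ =>
    have h := card_cyclicallyReducedWords_add_two (α := α) (n := n + 1) (by omega)
    have h₁ := hr (n + 1)
    have h₂ := hr (n + 2)
    simp only [add_assoc, Nat.reduceAdd] at h h₁ h₂ ih ⊢
    have hodd : Odd (n + 3) ↔ Odd (n + 1) := by simp [parity_simps]
    simp only [hodd]
    split_ifs at ih ⊢ <;> omega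

end Words

/-- The number of freely and cyclically reduced words of length `ℓ ≥ 1` in the
free group of rank `g` is `(2g-1)^ℓ + 1` for odd `ℓ` and `(2g-1)^ℓ + (2g-1)` for
even `ℓ`. -/
theorem count_cyclicallyReduced_words (g ℓ : ℕ) (hg : 1 ≤ g) (hℓ : 1 ≤ ℓ) :
    {l : List (Fin g × Bool) | l.length = ℓ ∧ FreelyRed l ∧ CyclRedWord l}.ncard =
      if Odd ℓ then (2 * g - 1) ^ ℓ + 1 else (2 * g - 1) ^ ℓ + (2 * g - 1) := by
  have : Nonempty (Fin g) := ⟨⟨0, hg⟩⟩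
  rw [← coe_cyclicallyReducedWords hℓ, Set.ncard_coe_finset, card_cyclicallyReducedWords hℓ,
    Fintype.card_fin]
end

section
/- The number of cyclically reduced necklaces of length ℓ in the free group of rank g (equivalence classes of reduced, cyclically reduced words under cyclic rotation) equals (1/ℓ)·Σ_{d|ℓ} φ(d)·C(g, ℓ/d), where C(g,m) = (2g−1)^m + 1 for m odd and (2g−1)^m + 2g−1 for m even. -/
/-- A word is cyclically reduced if no two cyclically adjacent letters
(including the last/first pair) are mutually inverse. -/
def CyclicallyReduced {α : Type*} (l : List (α × Bool)) : Prop :=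
  (l.Chain' fun a b => ¬ IsInvPair a b) ∧
    ∀ a b, l.getLast? = some a → l.head? = some b → ¬ IsInvPair a b

/-- The number of cyclically reduced words of length `m` in the free group of
rank `g`. -/
def Cred (g m : ℕ) : ℕ :=
  if Odd m then (2 * g - 1) ^ m + 1 else (2 * g - 1) ^ m + (2 * g - 1)

/-!
Burnside's lemma for `ZMod ℓ` acting on cyclically reduced words of length `ℓ` by rotation.
Rotation by `k` fixes exactly the `ℓ/d`-th powers of cyclically reduced words of length
`d = gcd(ℓ, k)`, and each `d ∣ ℓ` arises from `φ(ℓ/d)` values of `k`.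

Cyclically reduced words of length `m` are the closed walks of length `m` in the graph on the
`2g` letters with adjacency matrix `J - P`, where `J` is the all-ones matrix and `P` the
permutation matrix of `a ↦ a⁻¹`. As `P² = 1` and `JP = PJ = J`, one gets
`(J - P)^m = c J + (-P)^m` with `2g c = (2g-1)^m - (-1)^m`, whose trace is `C(g, m)`.
-/

open Finset List

variable {α : Type*}

section CyclicChain

variable {R : α → α → Prop}

/-- `l ++ l` contains every pair of cyclically adjacent letters of `l`. -/
def IsCyclicChain (R : α → α → Prop) (l : List α) : Prop := IsChain R (l ++ l)

theorem isCyclicChain_cons_iff {a : α} {t : List α} :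
    IsCyclicChain R (a :: t) ↔ IsChain R (a :: (t ++ [a])) := by
  rw [IsCyclicChain, ← cons_append, isChain_split]
  exact ⟨And.left, fun h => ⟨h, h.prefix ⟨[a], by simp⟩⟩⟩

theorem IsCyclicChain.rotate {l : List α} (h : IsCyclicChain R l) (k : ℕ) :
    IsCyclicChain R (l.rotate k) := by
  rcases eq_or_ne l [] with rfl | hl
  · simpa using h
  have h₃ : IsChain R (l ++ l ++ l) := h.append_overlap h hl
  rw [IsCyclicChain, rotate_eq_drop_append_take_mod]
  set x := take (k % l.length) l
  set y := drop (k % l.length) l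
  have hxy : x ++ y = l := take_append_drop _ _
  exact h₃.infix ⟨x, y, by rw [← hxy]; simp⟩

theorem isChain_flatten_replicate {u : List α} (hu : u ≠ []) (m : ℕ) :
    IsChain R (replicate (m + 2) u).flatten ↔ IsChain R (u ++ u) := by
  have hrep := isChain_replicate_of_rel (r := fun l₁ l₂ : List α =>
    ∀ x ∈ l₁.getLast?, ∀ y ∈ l₂.head?, R x y) (m + 1) (a := u)
  rw [isChain_flatten (by simp [hu]), isChain_append, replicate_succ, isChain_cons]
  simp only [List.mem_cons, mem_replicate, head?_replicate]
  grind

theorem isCyclicChain_flatten_replicate {u : List α} {q : ℕ} (hq : q ≠ 0) :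
    IsCyclicChain R (replicate q u).flatten ↔ IsCyclicChain R u := by
  rcases eq_or_ne u [] with rfl | hu
  · simp [IsCyclicChain]
  obtain ⟨m, hm⟩ : ∃ m, q + q = m + 2 := ⟨q + q - 2, by omega⟩
  rw [IsCyclicChain, ← flatten_append, replicate_append_replicate, hm,
    isChain_flatten_replicate hu]
  rfl

end CyclicChain

section Periodic

theorem eq_flatten_replicate_of_append_comm {u v : List α} {q : ℕ}
    (hv : v.length = q * u.length) (h : v ++ u = u ++ v) : v = (replicate q u).flatten := by
  induction q generalizing v with
  | zero => simpa using hv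
  | succ q ih =>
    have hle : u.length ≤ v.length := by rw [hv]; exact Nat.le_mul_of_pos_left _ q.succ_pos
    have hpre : v.take u.length = u := by
      simpa [take_append_of_le_length hle] using congrArg (take u.length) h
    rw [← take_append_drop u.length v, hpre] at h ⊢
    have hw : drop u.length v ++ u = u ++ drop u.length v := by simpa using h
    rw [ih (by simp [hv, Nat.succ_mul]) hw, replicate_succ, flatten_cons]

theorem rotate_flatten_replicate (u : List α) (q : ℕ) :
    (replicate q u).flatten.rotate u.length = (replicate q u).flatten := by
  cases q with
  | zero => simp
  | succ q =>
    conv_lhs => rw [replicate_succ, flatten_cons, rotate_append_length_eq]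
    rw [← flatten_concat, ← replicate_succ']

theorem flatten_replicate_take_of_rotate_eq_self {l : List α} {n d : ℕ} (hl : l.length = n)
    (hd : d ∣ n) (h : l.rotate d = l) : (replicate (n / d) (l.take d)).flatten = l := by
  subst hl
  rcases eq_or_ne l [] with rfl | hl
  · simp
  have hpos : 0 < l.length := length_pos_iff.mpr hl
  have hdl : d ≤ l.length := Nat.le_of_dvd hpos hd
  have hd0 : 0 < d := Nat.pos_of_dvd_of_pos hd hpos
  obtain ⟨q, hq⟩ : ∃ q, l.length / d = q + 1 :=
    ⟨l.length / d - 1, by have := Nat.div_pos hdl hd0; omega⟩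
  have hu : (l.take d).length = d := length_take_of_le hdl
  have hcomm : l.drop d ++ l.take d = l.take d ++ l.drop d := by
    conv_rhs => rw [take_append_drop, ← h]
    rw [rotate_eq_drop_append_take hdl]
  have hv : (l.drop d).length = q * (l.take d).length := by
    have := Nat.div_mul_cancel hd
    rw [hq] at this
    rw [length_drop, hu, ← this]
    simp [Nat.succ_mul]
  rw [hq, replicate_succ, flatten_cons, ← eq_flatten_replicate_of_append_comm hv hcomm,
    take_append_drop]

theorem isPeriodicPt_rotate_one_iff {l : List α} {k : ℕ} :
    Function.IsPeriodicPt (rotate · 1) k l ↔ l.rotate k = l := by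
  have hiter : (rotate · 1)^[k] l = l.rotate k := by
    induction k with
    | zero => simp
    | succ k ih => rw [Function.iterate_succ_apply', ih, rotate_rotate]
  rw [Function.IsPeriodicPt, Function.IsFixedPt, hiter]

theorem rotate_eq_self_iff_rotate_gcd {l : List α} {n : ℕ} (hl : l.length = n) {k : ℕ} :
    l.rotate k = l ↔ l.rotate (n.gcd k) = l := by
  subst hl
  simp only [← isPeriodicPt_rotate_one_iff]
  exact ⟨(isPeriodicPt_rotate_one_iff.mpr (rotate_length l)).gcd,
    fun h => h.trans_dvd (Nat.gcd_dvd_right _ _)⟩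

end Periodic

section FixedLength

instance [Finite α] (m : ℕ) (P : List α → Prop) :
    Finite {l : List α // l.length = m ∧ P l} :=
  Finite.of_injective (β := List.Vector α m) (fun l => ⟨l.1, l.2.1⟩) fun _ _ h =>
    Subtype.ext (congrArg (fun v : List.Vector α m => v.1) h)

def equivSigmaCons (P : List α → Prop) (m : ℕ) :
    {l : List α // l.length = m + 1 ∧ P l} ≃
      Σ a : α, {t : List α // t.length = m ∧ P (a :: t)} where
  toFun
    | ⟨[], h⟩ => absurd h.1 (by simp)
    | ⟨a :: t, h⟩ => ⟨a, t, by simpa using h⟩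
  invFun p := ⟨p.1 :: p.2.1, by simpa using p.2.2⟩
  left_inv := by rintro ⟨_ | ⟨a, t⟩, h⟩ <;> simp at h ⊢
  right_inv _ := rfl

theorem card_length_zero (P : List α → Prop) [Decidable (P [])] :
    Nat.card {l : List α // l.length = 0 ∧ P l} = if P [] then 1 else 0 := by
  split_ifs with h
  · exact Nat.card_eq_one_iff_exists.mpr
      ⟨⟨[], rfl, h⟩, fun ⟨t, ht, _⟩ => Subtype.ext (length_eq_zero_iff.mp ht)⟩
  · have : IsEmpty {l : List α // l.length = 0 ∧ P l} :=
      ⟨fun ⟨t, ht, hP⟩ => h (length_eq_zero_iff.mp ht ▸ hP)⟩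
    exact Nat.card_of_isEmpty

theorem card_length_succ [Fintype α] (P : List α → Prop) (m : ℕ) :
    Nat.card {l : List α // l.length = m + 1 ∧ P l} =
      ∑ a, Nat.card {t : List α // t.length = m ∧ P (a :: t)} := by
  rw [Nat.card_congr (equivSigmaCons P m), Nat.card_sigma]

end FixedLength

abbrev CyclicWord (R : α → α → Prop) (n : ℕ) :=
  {l : List α // l.length = n ∧ IsCyclicChain R l}

namespace CyclicWord

variable {R : α → α → Prop} {n : ℕ}

theorem rotate_mod (w : CyclicWord R n) (k : ℕ) : w.1.rotate (k % n) = w.1.rotate k := by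
  obtain ⟨l, rfl, -⟩ := w
  exact List.rotate_mod l k

instance [NeZero n] : AddAction (ZMod n) (CyclicWord R n) where
  vadd k w := ⟨w.1.rotate k.val, by rw [length_rotate, w.2.1], w.2.2.rotate _⟩
  zero_vadd w := Subtype.ext (by change w.1.rotate (0 : ZMod n).val = w.1; simp)
  add_vadd j k w := Subtype.ext (by
    change w.1.rotate (j + k).val = (w.1.rotate k.val).rotate j.val
    rw [ZMod.val_add, rotate_mod, rotate_rotate, Nat.add_comm])

variable [NeZero n]

theorem val_vadd (k : ZMod n) (w : CyclicWord R n) : (k +ᵥ w).1 = w.1.rotate k.val := rfl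

theorem orbitRel_iff_isRotated {w₁ w₂ : CyclicWord R n} :
    AddAction.orbitRel (ZMod n) (CyclicWord R n) w₁ w₂ ↔ w₁.1 ~r w₂.1 := by
  rw [AddAction.orbitRel_apply, AddAction.mem_orbit_iff, isRotated_comm]
  constructor
  · rintro ⟨k, hk⟩
    exact ⟨k.val, by rw [← hk, val_vadd]⟩
  · rintro ⟨k, hk⟩
    refine ⟨k, Subtype.ext ?_⟩
    rw [val_vadd, ZMod.val_natCast, rotate_mod, hk]

theorem ncard_rotationClasses_eq_card_quotient :
    {c : Set (List α) | ∃ l, l.length = n ∧ IsCyclicChain R l ∧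
      c = {l' | ∃ k, l' = l.rotate k}}.ncard =
      Nat.card (AddAction.orbitRel.Quotient (ZMod n) (CyclicWord R n)) := by
  let f : AddAction.orbitRel.Quotient (ZMod n) (CyclicWord R n) → Set (List α) :=
    Quotient.lift (fun w => {l' | w.1 ~r l'}) fun w₁ w₂ h => by
      have h' := orbitRel_iff_isRotated.mp h
      ext l'
      exact ⟨h'.symm.trans, h'.trans⟩
  have hf : Function.Injective f := by
    intro q₁ q₂ h
    induction q₁ using Quotient.inductionOn with | h w₁ => ?_
    induction q₂ using Quotient.inductionOn with | h w₂ => ?_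
    have hw : w₂.1 ∈ f ⟦w₂⟧ := IsRotated.refl _
    rw [← h] at hw
    exact Quotient.sound (orbitRel_iff_isRotated.mpr hw)
  have hrange : Set.range f = {c | ∃ l, l.length = n ∧ IsCyclicChain R l ∧
      c = {l' | ∃ k, l' = l.rotate k}} := by
    ext c
    simp only [Set.mem_range]
    constructor
    · rintro ⟨⟨w⟩, rfl⟩
      exact ⟨w.1, w.2.1, w.2.2, by ext; simp [f, IsRotated, eq_comm]⟩
    · rintro ⟨l, hl, hc, rfl⟩
      exact ⟨⟦⟨l, hl, hc⟩⟧, by ext; simp [f, IsRotated, eq_comm]⟩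
  rw [← hrange, Set.ncard_range_of_injective hf]

theorem sum_card_fixedBy_eq_card_quotient_mul [Finite α] :
    ∑ k : ZMod n, Nat.card (AddAction.fixedBy (CyclicWord R n) k) =
      Nat.card (AddAction.orbitRel.Quotient (ZMod n) (CyclicWord R n)) * n := by
  classical
  have := Fintype.ofFinite (CyclicWord R n)
  simp only [Nat.card_eq_fintype_card]
  rw [AddAction.sum_card_fixedBy_eq_card_orbits_mul_card_addGroup, ZMod.card]

def fixedRotateEquiv {d : ℕ} (hd : d ∣ n) :
    {w : CyclicWord R n // w.1.rotate d = w.1} ≃ CyclicWord R d :=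
  have hdn : d ≤ n := Nat.le_of_dvd (NeZero.pos n) hd
  have hq : n / d ≠ 0 := (Nat.div_pos hdn (Nat.pos_of_dvd_of_pos hd (NeZero.pos n))).ne'
  { toFun w := ⟨w.1.1.take d, by rw [length_take, w.1.2.1, Nat.min_eq_left hdn], by
      rw [← isCyclicChain_flatten_replicate hq,
        flatten_replicate_take_of_rotate_eq_self w.1.2.1 hd w.2]
      exact w.1.2.2⟩
    invFun u := ⟨⟨(replicate (n / d) u.1).flatten,
      by simp [u.2.1, Nat.div_mul_cancel hd], (isCyclicChain_flatten_replicate hq).mpr u.2.2⟩,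
      by simpa only [u.2.1] using rotate_flatten_replicate u.1 (n / d)⟩
    left_inv w := Subtype.ext (Subtype.ext
      (flatten_replicate_take_of_rotate_eq_self w.1.2.1 hd w.2))
    right_inv u := Subtype.ext (by
      obtain ⟨q, hq'⟩ := Nat.exists_eq_succ_of_ne_zero hq
      simp only [hq', replicate_succ, flatten_cons]
      exact take_left' u.2.1) }

theorem card_fixedBy (k : ZMod n) :
    Nat.card (AddAction.fixedBy (CyclicWord R n) k) = Nat.card (CyclicWord R (n.gcd k.val)) :=
  Nat.card_congr <| (Equiv.subtypeEquivRight fun w => by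
    rw [AddAction.mem_fixedBy, Subtype.ext_iff, val_vadd,
      rotate_eq_self_iff_rotate_gcd w.2.1]).trans (fixedRotateEquiv (Nat.gcd_dvd_left _ _))

end CyclicWord

section RelMatrix

def relMatrix (R : α → α → Prop) [DecidableRel R] (S : Type*) [Zero S] [One S] :
    Matrix α α S :=
  Matrix.of fun a b => if R a b then 1 else 0

variable [Fintype α] [DecidableEq α] (R : α → α → Prop) [DecidableRel R]
  {S : Type*} [Semiring S]

theorem card_chain_eq_relMatrix_pow_apply (m : ℕ) (a b : α) :
    (Nat.card {t : List α // t.length = m ∧ IsChain R (a :: (t ++ [b]))} : S) =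
      (relMatrix R S ^ (m + 1)) a b := by
  induction m generalizing a with
  | zero =>
    rw [card_length_zero]
    by_cases h : R a b <;> simp [h, relMatrix]
  | succ m ih =>
    rw [card_length_succ, pow_succ', Matrix.mul_apply]
    push_cast
    refine Finset.sum_congr rfl fun c _ => ?_
    rw [← ih, relMatrix, Matrix.of_apply]
    by_cases h : R a c <;> simp [h]

theorem card_cyclicWord_eq_trace (m : ℕ) :
    (Nat.card (CyclicWord R (m + 1)) : S) = (relMatrix R S ^ (m + 1)).trace := by
  simp only [CyclicWord, card_length_succ, isCyclicChain_cons_iff, Nat.cast_sum,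
    card_chain_eq_relMatrix_pow_apply, Matrix.trace, Matrix.diag]

end RelMatrix

section Involution

theorem ones_mul_ones [Fintype α] :
    (Matrix.of (fun _ _ => 1) : Matrix α α ℤ) * Matrix.of (fun _ _ => 1) =
    (Fintype.card α : ℤ) • Matrix.of (fun _ _ => 1) := by
  ext a c
  simp [Matrix.mul_apply]

variable [DecidableEq α] {σ : α → α}

theorem relMatrix_ne_eq_sub :
    relMatrix (fun a b => b ≠ σ a) ℤ =
      Matrix.of (fun _ _ => 1) - relMatrix (fun a b => b = σ a) ℤ := by
  ext a b
  by_cases h : b = σ a <;> simp [relMatrix, h]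

variable [Fintype α]

theorem relMatrix_graph_mul_self (hσ : Function.Involutive σ) :
    relMatrix (fun a b => b = σ a) ℤ * relMatrix (fun a b => b = σ a) ℤ = 1 := by
  ext a c
  have hc : ∀ x, c = σ x ↔ x = σ c := fun x => by rw [eq_comm, hσ.eq_iff]
  simp [relMatrix, Matrix.mul_apply, Matrix.one_apply, hc, hσ.injective.eq_iff, eq_comm]

theorem relMatrix_graph_mul_ones :
    relMatrix (fun a b => b = σ a) ℤ * Matrix.of (fun _ _ => 1) = Matrix.of (fun _ _ => 1) := by
  ext a c
  simp [relMatrix, Matrix.mul_apply]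

theorem ones_mul_relMatrix_graph (hσ : Function.Involutive σ) :
    Matrix.of (fun _ _ => 1) * relMatrix (fun a b => b = σ a) ℤ = Matrix.of (fun _ _ => 1) := by
  ext a c
  have hc : ∀ x, c = σ x ↔ x = σ c := fun x => by rw [eq_comm, hσ.eq_iff]
  simp [relMatrix, Matrix.mul_apply, hc]

theorem trace_relMatrix_graph (hfix : ∀ a, σ a ≠ a) :
    (relMatrix (fun a b => b = σ a) ℤ).trace = 0 := by
  simp [relMatrix, Matrix.trace, fun a => (hfix a).symm]

theorem exists_relMatrix_ne_pow_eq (hσ : Function.Involutive σ) (m : ℕ) :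
    ∃ c : ℤ, (Fintype.card α : ℤ) * c = (Fintype.card α - 1) ^ m - (-1) ^ m ∧
      relMatrix (fun a b => b ≠ σ a) ℤ ^ m =
        c • Matrix.of (fun _ _ => 1) + (-1) ^ m • relMatrix (fun a b => b = σ a) ℤ ^ m := by
  have hPJ : ∀ k, relMatrix (fun a b => b = σ a) ℤ ^ k * Matrix.of (fun _ _ => 1) =
      Matrix.of (fun _ _ => 1) := fun k => by
    induction k with
    | zero => simp
    | succ k ih => rw [pow_succ, mul_assoc, relMatrix_graph_mul_ones, ih]
  induction m with
  | zero => exact ⟨0, by simp⟩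
  | succ m ih =>
    obtain ⟨c, hc, hpow⟩ := ih
    refine ⟨c * (Fintype.card α - 1) + (-1) ^ m,
      by linear_combination (Fintype.card α - 1 : ℤ) * hc, ?_⟩
    rw [pow_succ, hpow, relMatrix_ne_eq_sub, mul_sub, add_mul, add_mul, smul_mul_assoc,
      smul_mul_assoc, smul_mul_assoc, smul_mul_assoc, ones_mul_ones,
      ones_mul_relMatrix_graph hσ, hPJ, ← pow_succ]
    module

theorem trace_relMatrix_ne_pow (hσ : Function.Involutive σ) (hfix : ∀ a, σ a ≠ a) (m : ℕ) :
    (relMatrix (fun a b => b ≠ σ a) ℤ ^ m).trace = if Odd m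
      then ((Fintype.card α : ℤ) - 1) ^ m + 1
      else ((Fintype.card α : ℤ) - 1) ^ m + (Fintype.card α - 1) := by
  obtain ⟨c, hc, hpow⟩ := exists_relMatrix_ne_pow_eq hσ m
  have hJ : (Matrix.of fun _ _ => 1 : Matrix α α ℤ).trace = Fintype.card α := by
    simp [Matrix.trace]
  rw [hpow, Matrix.trace_add, Matrix.trace_smul, Matrix.trace_smul, hJ, smul_eq_mul,
    smul_eq_mul]
  have hP2 : relMatrix (fun a b => b = σ a) ℤ ^ 2 = 1 := by
    rw [sq, relMatrix_graph_mul_self hσ]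
  obtain ⟨k, rfl | rfl⟩ := Nat.even_or_odd' m
  · have hP : relMatrix (fun a b => b = σ a) ℤ ^ (2 * k) = 1 := by rw [pow_mul, hP2, one_pow]
    rw [(even_two_mul k).neg_one_pow] at hc
    rw [hP, Matrix.trace_one, (even_two_mul k).neg_one_pow,
      if_neg (Nat.not_odd_iff_even.mpr (even_two_mul k))]
    linear_combination hc
  · have hP : relMatrix (fun a b => b = σ a) ℤ ^ (2 * k + 1) =
        relMatrix (fun a b => b = σ a) ℤ := by
      rw [pow_succ, pow_mul, hP2, one_pow, one_mul]
    rw [(odd_two_mul_add_one k).neg_one_pow] at hc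
    rw [hP, trace_relMatrix_graph hfix, (odd_two_mul_add_one k).neg_one_pow,
      if_pos (odd_two_mul_add_one k)]
    linear_combination hc

end Involution

theorem sum_zmod_gcd_eq_sum_divisors_totient {M : Type*} [AddCommMonoid M] (n : ℕ) [NeZero n]
    (f : ℕ → M) :
    ∑ k : ZMod n, f (n.gcd k.val) = ∑ d ∈ n.divisors, d.totient • f (n / d) := by
  have hrange : ∑ k : ZMod n, f (n.gcd k.val) = ∑ k ∈ range n, f (n.gcd k) := by
    obtain ⟨m, rfl⟩ := Nat.exists_eq_succ_of_ne_zero (NeZero.ne n)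
    exact Fin.sum_univ_eq_sum_range (fun k => f ((m + 1).gcd k)) (m + 1)
  have hfiber : ∑ k ∈ range n, f (n.gcd k) = ∑ d ∈ n.divisors, (n / d).totient • f d := by
    rw [← sum_fiberwise_of_maps_to (g := n.gcd) fun k _ =>
      Nat.mem_divisors.mpr ⟨Nat.gcd_dvd_left n k, NeZero.ne n⟩]
    refine sum_congr rfl fun d hd => ?_
    rw [Nat.totient_div_of_dvd (Nat.dvd_of_mem_divisors hd), sum_congr rfl fun k hk =>
      congrArg f (Finset.mem_filter.mp hk).2, sum_const]
  rw [hrange, hfiber, ← Nat.sum_div_divisors]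
  exact sum_congr rfl fun d hd => by
    rw [Nat.div_div_self (Nat.dvd_of_mem_divisors hd) (NeZero.ne n)]

theorem cyclicallyReduced_iff_isCyclicChain {β : Type*} {l : List (β × Bool)} :
    CyclicallyReduced l ↔ IsCyclicChain (fun a b => b ≠ (a.1, !a.2)) l := by
  have hinv : ∀ a b : β × Bool, IsInvPair a b ↔ b = (a.1, !a.2) := by
    rintro ⟨x, s⟩ ⟨y, t⟩
    cases s <;> cases t <;> simp [IsInvPair, eq_comm]
  simp only [CyclicallyReduced, IsCyclicChain, List.Chain', isChain_append, hinv, Option.mem_def]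
  tauto

theorem card_reduced_cyclicWord_eq_cred {g m : ℕ} (hg : 1 ≤ g) (hm : m ≠ 0) :
    Nat.card (CyclicWord (fun a b : Fin g × Bool => b ≠ (a.1, !a.2)) m) = Cred g m := by
  obtain ⟨m, rfl⟩ : ∃ k, m = k + 1 := ⟨m - 1, by omega⟩
  have hσ : Function.Involutive fun a : Fin g × Bool => (a.1, !a.2) := fun a => by simp
  have hfix : ∀ a : Fin g × Bool, (a.1, !a.2) ≠ a := fun a h => by
    simpa using congrArg Prod.snd h
  apply Nat.cast_injective (R := ℤ)
  rw [card_cyclicWord_eq_trace, trace_relMatrix_ne_pow hσ hfix, Cred]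
  have h2g : ((2 * g - 1 : ℕ) : ℤ) = 2 * g - 1 := by omega
  simp only [Fintype.card_prod, Fintype.card_fin, Fintype.card_bool]
  split_ifs <;> push_cast [h2g] <;> ring

/-- The number of cyclically reduced necklaces (rotation classes of cyclically
reduced words) of length `ℓ` in the free group of rank `g` equals
`(1/ℓ)·∑_{d ∣ ℓ} φ(d)·C(g, ℓ/d)`. -/
theorem count_reduced_necklaces (g ℓ : ℕ) (hg : 1 ≤ g) (hℓ : 1 ≤ ℓ) :
    ℓ * {c : Set (List (Fin g × Bool)) | ∃ l, l.length = ℓ ∧ CyclicallyReduced l ∧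
          c = {l' | ∃ k, l' = l.rotate k}}.ncard =
      ∑ d ∈ ℓ.divisors, d.totient * Cred g (ℓ / d) := by
  have : NeZero ℓ := ⟨by omega⟩
  simp_rw [cyclicallyReduced_iff_isCyclicChain]
  rw [CyclicWord.ncard_rotationClasses_eq_card_quotient, mul_comm,
    ← CyclicWord.sum_card_fixedBy_eq_card_quotient_mul]
  simp_rw [CyclicWord.card_fixedBy]
  rw [sum_zmod_gcd_eq_sum_divisors_totient ℓ fun m => Nat.card (CyclicWord _ m)]
  refine sum_congr rfl fun d hd => ?_
  rw [smul_eq_mul, card_reduced_cyclicWord_eq_cred hg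
    (Nat.div_pos (Nat.divisor_le hd) (Nat.pos_of_mem_divisors hd)).ne']
end

section
/- If w is a nonempty cyclically reduced word over the alphabet of generators and inverses, then no cyclic rotation of w equals the formal inverse of w (the word obtained by reversing w and inverting each letter). -/
/-- The formal inverse of a word: reverse it and invert each letter. -/
def formalInv {α : Type*} (l : List (α × Bool)) : List (α × Bool) :=
  (l.map fun a => (a.1, !a.2)).reverse

/-- No cyclic rotation of a nonempty cyclically reduced word equals its formal
inverse. -/
theorem rotate_ne_formalInv {α : Type*} (l : List (α × Bool)) (hne : l ≠ [])
    (h : CyclicallyReduced l) (k : ℕ) : l.rotate k ≠ formalInv l := by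
  intro heq
  have hn0 : 0 < l.length := List.length_pos_iff.mpr hne
  set n := l.length with hn
  -- pointwise consequence
  have key : ∀ j (hj : j < n),
      l[(k + n - 1 - j) % n]'(Nat.mod_lt _ hn0) = ((l[j]'hj).1, !(l[j]'hj).2) := by
    intro j hj
    have hi : n - 1 - j < n := by omega
    have h1 : (l.rotate k)[n-1-j]'(by simpa using hi) =
        (formalInv l)[n-1-j]'(by simp [formalInv]; omega) := by
      simp_rw [heq]
    rw [List.getElem_rotate] at h1
    unfold formalInv at h1
    rw [List.getElem_reverse, List.getElem_map] at h1
    have e1 : (n - 1 - j + k) % l.length = (k + n - 1 - j) % n := by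
      rw [← hn]; congr 1; omega
    have e2 : (l.map fun a => (a.1, !a.2)).length - 1 - (n - 1 - j) = j := by
      rw [List.length_map, ← hn]; omega
    simp only [e1, e2] at h1
    exact h1
  have chain : ∀ j (hj : j + 1 < n), ¬ IsInvPair (l[j]'(by omega)) (l[j+1]'hj) := by
    have hc := List.isChain_iff_getElem.mp h.1
    intro j hj
    simpa using hc j (by omega)
  have key2 : ∀ x j (hx : x < n) (hj : j < n), (x + j) % n = (k + n - 1) % n →
      l[x]'hx = ((l[j]'hj).1, !(l[j]'hj).2) := by
    intro x j hx hj hmod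
    have h1 : Nat.ModEq n (x + j) (k + n - 1) := hmod
    have h2 : (k + n - 1 - j) + j = k + n - 1 := by omega
    have h3 : Nat.ModEq n ((k + n - 1 - j) + j) (x + j) := by rw [h2]; exact h1.symm
    have h4 : Nat.ModEq n (k + n - 1 - j) x := h3.add_right_cancel' j
    have h5 : (k + n - 1 - j) % n = x := by
      have := h4
      unfold Nat.ModEq at this
      rwa [Nat.mod_eq_of_lt hx] at this
    have hk := key j hj
    simp only [h5] at hk
    exact hk
  set r := (k + n - 1) % n with hr
  have hrn : r < n := Nat.mod_lt _ hn0
  by_cases hpar : r % 2 = 0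
  · -- fixed point j = r / 2 : a letter equal to its own inverse
    have hj : r / 2 < n := by omega
    have hfix := key2 (r/2) (r/2) hj hj (by
      rw [show r/2 + r/2 = r by omega, Nat.mod_eq_of_lt hrn])
    have := congrArg Prod.snd hfix
    simp at this
  · by_cases hnpar : n % 2 = 0
    · -- adjacent pair, contradicting Chain'
      have hj1 : (r-1)/2 + 1 < n := by omega
      have hkey := key2 ((r-1)/2 + 1) ((r-1)/2) hj1 (by omega)
        (by rw [show (r-1)/2 + 1 + (r-1)/2 = r by omega, Nat.mod_eq_of_lt hrn])
      exact chain ((r-1)/2) hj1 ⟨by rw [hkey], by rw [hkey]; simp⟩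
    · -- n odd: fixed point j = (r+n)/2
      have hj : (r+n)/2 < n := by omega
      have hfix := key2 ((r+n)/2) ((r+n)/2) hj hj (by
        rw [show (r+n)/2 + (r+n)/2 = r + n by omega, Nat.add_mod_right,
          Nat.mod_eq_of_lt hrn])
      have := congrArg Prod.snd hfix
      simp at this
end

section
/- The involution sending a cyclically reduced necklace to the necklace of its formal inverse is fixed-point free; consequently, for g ≥ 1 and ℓ ≥ 1, the number of cyclically reduced necklaces of length ℓ in the free group of rank g is even, and the number of cyclically reduced bracelets is exactly half the number of cyclically reduced necklaces. -/
/-- The set of cyclically reduced necklaces of length `ℓ` over `Fin g`: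
equivalence classes of cyclically reduced words under cyclic rotation. -/
def Necklaces (g ℓ : ℕ) : Set (Set (List (Fin g × Bool))) :=
  {c | ∃ l, l.length = ℓ ∧ CyclicallyReduced l ∧ c = {l' | ∃ k, l' = l.rotate k}}

/-- The set of cyclically reduced bracelets of length `ℓ` over `Fin g`:
equivalence classes under cyclic rotation together with formal inversion. -/
def Bracelets (g ℓ : ℕ) : Set (Set (List (Fin g × Bool))) :=
  {c | ∃ l, l.length = ℓ ∧ CyclicallyReduced l ∧
    c = {l' | (∃ k, l' = l.rotate k) ∨ ∃ k, l' = (formalInv l).rotate k}}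

/-!
Write `w⁻¹` for the formal inverse of a word `w`. If a rotation `B ++ A` of `w = A ++ B` equals
`w⁻¹ = B⁻¹ ++ A⁻¹`, comparing lengths gives `A = A⁻¹` and `B = B⁻¹`, and one of them is a
nonempty subword of `w`. A nonempty word equal to its own formal inverse has a self-inverse middle
letter (odd length) or two mutually inverse middle letters (even length), so it is not reduced.
Hence `c ↦ c⁻¹` is a fixed-point-free involution on cyclically reduced necklaces; the bracelets
are its orbits `c ∪ c⁻¹`, each made of exactly two necklaces.
-/

theorem Set.two_mul_ncard_image_of_fiber_eq_pair {β γ : Type*} {s : Set β} (hs : s.Finite)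
    (f : β → γ) (σ : β → β) (hσ : Set.MapsTo σ s s) (hne : ∀ x ∈ s, σ x ≠ x)
    (hfib : ∀ x ∈ s, ∀ y ∈ s, f y = f x ↔ y = x ∨ y = σ x) :
    2 * (f '' s).ncard = s.ncard := by
  classical
  lift s to Finset β using hs
  rw [← Finset.coe_image, Set.ncard_coe_finset, Set.ncard_coe_finset,
    Finset.card_eq_sum_card_image f s, mul_comm, ← smul_eq_mul, ← Finset.sum_const]
  refine Finset.sum_congr rfl fun b hb => ?_
  obtain ⟨x, hx, rfl⟩ := Finset.mem_image.1 hb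
  have hfiber : {y ∈ s | f y = f x} = {x, σ x} := by
    ext y
    simp only [Finset.mem_filter, Finset.mem_insert, Finset.mem_singleton]
    refine ⟨fun ⟨hy, hyx⟩ => (hfib x hx y hy).1 hyx, fun hy => ?_⟩
    have hys : y ∈ s := by rcases hy with rfl | rfl; exacts [hx, hσ hx]
    exact ⟨hys, (hfib x hx y hys).2 hy⟩
  rw [hfiber, Finset.card_pair (hne x hx).symm]

namespace CyclicWord

variable {α : Type*}

theorem not_isInvPair_self (a : α × Bool) : ¬ IsInvPair a a := fun h => by simpa using h.2

theorem isInvPair_inv_inv_iff {a b : α × Bool} :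
    IsInvPair (b.1, !b.2) (a.1, !a.2) ↔ IsInvPair a b := by
  unfold IsInvPair
  grind

@[simp] theorem length_formalInv (l : List (α × Bool)) : (formalInv l).length = l.length := by
  simp [formalInv]

@[simp] theorem formalInv_formalInv (l : List (α × Bool)) : formalInv (formalInv l) = l := by
  simp [formalInv, List.map_reverse, Function.comp_def]

theorem formalInv_append (a b : List (α × Bool)) :
    formalInv (a ++ b) = formalInv b ++ formalInv a := by
  simp [formalInv]

theorem getElem_formalInv (l : List (α × Bool)) (i : ℕ) (h : i < l.length) :
    (formalInv l)[i]'(by simpa using h) =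
      ((l[l.length - 1 - i]'(by omega)).1, !(l[l.length - 1 - i]'(by omega)).2) := by
  simp [formalInv, List.getElem_reverse]

theorem cyclicallyReduced_formalInv {l : List (α × Bool)} (h : CyclicallyReduced l) :
    CyclicallyReduced (formalInv l) := by
  refine ⟨?_, fun a b ha hb => ?_⟩
  · rw [formalInv, List.Chain', List.isChain_reverse, List.isChain_map]
    exact h.1.imp fun a b hab => isInvPair_inv_inv_iff.not.mpr hab
  · simp only [formalInv, List.getLast?_reverse, List.head?_reverse, List.head?_map,
      List.getLast?_map, Option.map_eq_some_iff] at ha hb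
    obtain ⟨a, ha, rfl⟩ := ha
    obtain ⟨b, hb, rfl⟩ := hb
    rw [isInvPair_inv_inv_iff]
    exact h.2 b a hb ha

theorem formalInv_ne_self {l : List (α × Bool)} (hl : l ≠ [])
    (h : l.IsChain fun a b => ¬ IsInvPair a b) : formalInv l ≠ l := by
  intro hinv
  have hn : 0 < l.length := List.length_pos_iff.2 hl
  have mirror : ∀ i j (hi : i < l.length) (hj : j < l.length), i + j + 1 = l.length →
      IsInvPair l[i] l[j] := by
    intro i j hi hj hij
    have hi' := getElem_formalInv l i hi
    simp only [List.getElem_of_eq hinv, show l.length - 1 - i = j by omega] at hi'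
    exact ⟨by rw [hi'], by rw [hi']⟩
  rcases Nat.even_or_odd l.length with ⟨m, hm⟩ | ⟨m, hm⟩
  · have hadj := List.isChain_iff_getElem.1 h (m - 1) (by omega)
    simp only [show m - 1 + 1 = m by omega] at hadj
    exact hadj (mirror (m - 1) m (by omega) (by omega) (by omega))
  · exact not_isInvPair_self _ (mirror m m (by omega) (by omega) (by omega))

theorem not_isRotated_formalInv {l : List (α × Bool)} (hl : l ≠ [])
    (h : l.IsChain fun a b => ¬ IsInvPair a b) : ¬ l ~r formalInv l := by
  rintro ⟨k, hk⟩
  set A := l.take (k % l.length)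
  set B := l.drop (k % l.length)
  have hAB : l = A ++ B := (List.take_append_drop _ _).symm
  have hBA : B ++ A = formalInv B ++ formalInv A := by
    rw [← formalInv_append, ← hAB, ← hk, List.rotate_eq_drop_append_take_mod]
  obtain ⟨hB, hA⟩ := List.append_inj hBA (by simp)
  rw [hAB] at h hl
  rcases eq_or_ne A [] with hA0 | hA0
  · exact formalInv_ne_self (by simpa [hA0] using hl) h.right_of_append hB.symm
  · exact formalInv_ne_self hA0 h.left_of_append hA.symm

def rotations (l : List α) : Set (List α) := {l' | ∃ k, l' = l.rotate k}

theorem mem_rotations {l l' : List α} : l' ∈ rotations l ↔ l ~r l' := by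
  simp only [rotations, Set.mem_ofPred_eq, List.IsRotated, eq_comm]

theorem rotations_eq_of_isRotated {l l' : List α} (h : l ~r l') : rotations l' = rotations l := by
  ext m
  simp only [mem_rotations]
  exact ⟨h.trans, h.symm.trans⟩

theorem isRotated_formalInv {l l' : List (α × Bool)} (h : l ~r l') :
    formalInv l ~r formalInv l' :=
  (h.map _).reverse

theorem isRotated_formalInv_iff {l l' : List (α × Bool)} :
    formalInv l ~r l' ↔ l ~r formalInv l' :=
  ⟨fun h => by simpa using isRotated_formalInv h, fun h => by simpa using isRotated_formalInv h⟩

theorem image_formalInv_rotations (l : List (α × Bool)) :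
    formalInv '' rotations l = rotations (formalInv l) := by
  rw [Set.image_eq_preimage_of_inverse formalInv_formalInv formalInv_formalInv]
  ext m
  simp only [Set.mem_preimage, mem_rotations, isRotated_formalInv_iff]

theorem rotations_formalInv_ne {l : List (α × Bool)} (hl : l ≠ [])
    (h : l.IsChain fun a b => ¬ IsInvPair a b) : rotations (formalInv l) ≠ rotations l := by
  intro heq
  have : formalInv l ∈ rotations l := heq ▸ mem_rotations.2 (List.IsRotated.refl _)
  exact not_isRotated_formalInv hl h (mem_rotations.1 this)

theorem rotations_union_formalInv_eq_iff {l m : List (α × Bool)} :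
    rotations m ∪ rotations (formalInv m) = rotations l ∪ rotations (formalInv l) ↔
      rotations m = rotations l ∨ rotations m = rotations (formalInv l) := by
  refine ⟨fun h => ?_, ?_⟩
  · have hm : m ∈ rotations l ∪ rotations (formalInv l) :=
      h ▸ Or.inl (mem_rotations.2 (List.IsRotated.refl m))
    rcases hm with hm | hm
    · exact Or.inl (rotations_eq_of_isRotated (mem_rotations.1 hm))
    · exact Or.inr (rotations_eq_of_isRotated (mem_rotations.1 hm))
  · rintro (h | h) <;> rw [← image_formalInv_rotations, ← image_formalInv_rotations, h]
    simp only [image_formalInv_rotations, formalInv_formalInv]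
    exact Set.union_comm _ _

end CyclicWord

open CyclicWord

theorem necklaces_eq_image (g ℓ : ℕ) :
    Necklaces g ℓ = rotations '' {l | l.length = ℓ ∧ CyclicallyReduced l} :=
  Set.ext fun _ => ⟨fun ⟨l, hl, hcr, hc⟩ => ⟨l, ⟨hl, hcr⟩, hc.symm⟩,
    fun ⟨l, ⟨hl, hcr⟩, hc⟩ => ⟨l, hl, hcr, hc.symm⟩⟩

theorem bracelets_eq_image_necklaces (g ℓ : ℕ) :
    Bracelets g ℓ = (fun c => c ∪ formalInv '' c) '' Necklaces g ℓ := by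
  rw [necklaces_eq_image, Set.image_image]
  have bracelet_eq (l : List (Fin g × Bool)) :
      rotations l ∪ formalInv '' rotations l = rotations l ∪ rotations (formalInv l) := by
    rw [image_formalInv_rotations]
  exact Set.ext fun _ => ⟨fun ⟨l, hl, hcr, hc⟩ => ⟨l, ⟨hl, hcr⟩, (bracelet_eq l).trans hc.symm⟩,
    fun ⟨l, ⟨hl, hcr⟩, hc⟩ => ⟨l, hl, hcr, hc.symm.trans (bracelet_eq l)⟩⟩

theorem necklaces_finite (g ℓ : ℕ) : (Necklaces g ℓ).Finite := by
  rw [necklaces_eq_image]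
  exact ((List.finite_length_eq _ ℓ).subset fun _ hl => hl.1).image _

theorem bracelets_half_necklaces_general (g ℓ : ℕ) (hℓ : 1 ≤ ℓ) :
    (∀ l : List (Fin g × Bool), l.length = ℓ → CyclicallyReduced l →
        ∀ k, l.rotate k ≠ formalInv l) ∧
      2 ∣ (Necklaces g ℓ).ncard ∧
      2 * (Bracelets g ℓ).ncard = (Necklaces g ℓ).ncard := by
  have ne_nil {l : List (Fin g × Bool)} (hl : l.length = ℓ) : l ≠ [] :=
    List.ne_nil_of_length_pos (by omega)
  have hcount : 2 * (Bracelets g ℓ).ncard = (Necklaces g ℓ).ncard := by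
    rw [bracelets_eq_image_necklaces]
    refine Set.two_mul_ncard_image_of_fiber_eq_pair (necklaces_finite g ℓ) _ (formalInv '' ·)
      ?_ ?_ ?_ <;> rw [necklaces_eq_image]
    · rintro _ ⟨l, ⟨hl, hcr⟩, rfl⟩
      exact ⟨formalInv l, ⟨by simpa, cyclicallyReduced_formalInv hcr⟩,
        (image_formalInv_rotations l).symm⟩
    · rintro _ ⟨l, ⟨hl, hcr⟩, rfl⟩
      rw [image_formalInv_rotations]
      exact rotations_formalInv_ne (ne_nil hl) hcr.1
    · rintro _ ⟨l, -, rfl⟩ _ ⟨m, -, rfl⟩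
      simp only [image_formalInv_rotations]
      exact rotations_union_formalInv_eq_iff
  exact ⟨fun l hl hcr k hk => not_isRotated_formalInv (ne_nil hl) hcr.1 ⟨k, hk⟩,
    ⟨_, hcount.symm⟩, hcount⟩

/-- Inversion is a fixed-point-free involution on cyclically reduced necklaces;
hence the number of necklaces is even and the number of bracelets is exactly
half the number of necklaces. -/
theorem bracelets_half_necklaces (g ℓ : ℕ) (hg : 1 ≤ g) (hℓ : 1 ≤ ℓ) :
    (∀ l : List (Fin g × Bool), l.length = ℓ → CyclicallyReduced l →
        ∀ k, l.rotate k ≠ formalInv l) ∧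
      2 ∣ (Necklaces g ℓ).ncard ∧
      2 * (Bracelets g ℓ).ncard = (Necklaces g ℓ).ncard :=
  bracelets_half_necklaces_general g ℓ hℓ
end

section
/- Two elements of a free group are conjugate if and only if their cyclically reduced forms are cyclic rotations of each other (as reduced words). -/
/-! Rotating a word is conjugation by one of its prefixes. Conversely, conjugate a cyclically
reduced word `V` by a reduced word `C` one letter `x` at a time. If `x` is the first letter of `V`
or the inverse of its last letter, `x⁻¹ V x` is a rotation of `V`, again cyclically reduced.
Otherwise `x⁻¹ V x` is reduced as written, hence so is `C⁻¹ V C`; but its first and last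
letters are mutually inverse, so the conjugate is not cyclically reduced. -/

namespace FreeGroup

variable {α : Type*} {L V C : List (α × Bool)}

theorem letter_rel_iff_ne_inv {a b : α × Bool} :
    (a.1 = b.1 → a.2 = b.2) ↔ b ≠ (a.1, !a.2) := by
  obtain ⟨a₁, a₂⟩ := a; obtain ⟨b₁, b₂⟩ := b
  cases a₂ <;> cases b₂ <;> simp [eq_comm]

theorem IsReduced.invRev (h : IsReduced L) : IsReduced (invRev L) := by
  rw [IsReduced, FreeGroup.invRev, List.isChain_reverse, List.isChain_map]
  exact h.imp fun a b hab hba => by simpa using (hab hba.symm).symm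

theorem isCyclicallyReduced_iff_chain :
    IsCyclicallyReduced L ↔
      Cycle.Chain (fun a b : α × Bool => a.1 = b.1 → a.2 = b.2) (L : Cycle (α × Bool)) := by
  cases L with
  | nil => simp
  | cons a l =>
    rw [Cycle.chain_coe_cons, ← List.cons_append, List.isChain_append, isCyclicallyReduced_iff]
    simp [IsReduced]

theorem IsCyclicallyReduced.rotate (h : IsCyclicallyReduced L) (k : ℕ) :
    IsCyclicallyReduced (L.rotate k) := by
  rwa [isCyclicallyReduced_iff_chain, Cycle.coe_eq_coe.mpr (List.IsRotated.forall L k),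
    ← isCyclicallyReduced_iff_chain]

theorem not_isCyclicallyReduced_invRev_append_append (hC : C ≠ []) :
    ¬ IsCyclicallyReduced (invRev C ++ V ++ C) := by
  intro h
  have := h.2 (C.getLast hC) (by simp [List.getLast?_append, List.getLast?_eq_some_getLast hC])
    ((C.getLast hC).1, !(C.getLast hC).2)
    (by simp [List.head?_append, invRev, List.getLast?_eq_some_getLast hC]) rfl
  simp at this

theorem inv_mul_mk_append_mul (P Q : List (α × Bool)) :
    (mk P)⁻¹ * mk (P ++ Q) * mk P = mk (Q ++ P) := by
  simp only [← mul_mk]; group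

theorem mul_mk_append_mul_inv (P Q : List (α × Bool)) :
    mk Q * mk (P ++ Q) * (mk Q)⁻¹ = mk (Q ++ P) := by
  simp only [← mul_mk]; group

theorem isConj_mk_rotate (L : List (α × Bool)) (k : ℕ) : IsConj (mk L) (mk (L.rotate k)) := by
  rw [List.rotate_eq_drop_append_take_mod]
  nth_rw 1 [← List.take_append_drop (k % L.length) L]
  exact isConj_iff.mpr ⟨_, mul_mk_append_mul_inv _ _⟩

theorem conj_letter_eq_mk_rotate_or_isReduced (hV : IsReduced V) (x : α × Bool) :
    (∃ k, (mk [x])⁻¹ * mk V * mk [x] = mk (V.rotate k)) ∨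
      IsReduced (invRev [x] ++ V ++ [x]) := by
  by_cases hnil : V = []
  · refine .inl ⟨0, ?_⟩
    simp only [hnil, List.rotate_nil, ← one_eq_mk, mul_one, inv_mul_cancel]
  by_cases hhead : V.head? = some x
  · obtain ⟨s, rfl⟩ : ∃ s, V = [x] ++ s :=
      ⟨V.tail, by simpa using (List.cons_head?_tail hhead).symm⟩
    exact .inl ⟨1, by rw [inv_mul_mk_append_mul]; simp⟩
  by_cases hlast : V.getLast? = some (x.1, !x.2)
  · obtain ⟨s, rfl⟩ : ∃ s, V = s ++ [(x.1, !x.2)] := List.getLast?_eq_some_iff.mp hlast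
    have hx : mk [x] = (mk [(x.1, !x.2)])⁻¹ := by simp [inv_mk, invRev]
    exact .inl ⟨s.length, by
      rw [hx, inv_inv, mul_mk_append_mul_inv, List.rotate_append_length_eq]⟩
  refine .inr (IsReduced.append_overlap ?_ ?_ hnil)
  · obtain ⟨a, s, rfl⟩ := List.exists_cons_of_ne_nil hnil
    simp only [List.head?_cons, Option.some.injEq] at hhead
    exact isReduced_cons_cons.mpr ⟨letter_rel_iff_ne_inv.mpr (by simpa using hhead), hV⟩
  · rw [IsReduced, List.isChain_append]
    refine ⟨hV, List.isChain_singleton x, fun b hb c hc => ?_⟩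
    simp only [List.head?_cons, Option.mem_def, Option.some.injEq] at hc hb
    subst hc
    rw [letter_rel_iff_ne_inv]
    rintro rfl
    simp_all

theorem isReduced_invRev_append_append_cons {x : α × Bool} {t : List (α × Bool)}
    (hC : IsReduced (x :: t)) (h : IsReduced (invRev [x] ++ V ++ [x])) :
    IsReduced (invRev (x :: t) ++ V ++ (x :: t)) := by
  have hleft : IsReduced (invRev t ++ invRev [x] ++ (V ++ [x])) :=
    IsReduced.append_overlap (invRev_cons ▸ hC.invRev) (by simpa using h) (by simp [invRev])
  rw [invRev_cons, ← List.singleton_append]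
  simpa using IsReduced.append_overlap (L₁ := invRev t ++ invRev [x] ++ V) (L₂ := [x])
    (by simpa using hleft) hC (by simp)

theorem toWord_inv_mk_mul_mk_mul_mk [DecidableEq α] (hred : IsReduced (invRev C ++ V ++ C)) :
    ((mk C)⁻¹ * mk V * mk C).toWord = invRev C ++ V ++ C := by
  rw [inv_mk, mul_mk, mul_mk, toWord_mk, hred.reduce_eq]

theorem exists_rotate_of_isCyclicallyReduced_conj [DecidableEq α] {v : FreeGroup α}
    (hC : IsReduced C) (hv : IsCyclicallyReduced v.toWord)
    (hconj : IsCyclicallyReduced ((mk C)⁻¹ * v * mk C).toWord) :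
    ∃ k, ((mk C)⁻¹ * v * mk C).toWord = v.toWord.rotate k := by
  induction C generalizing v with
  | nil => exact ⟨0, by simp [← one_eq_mk]⟩
  | cons x t ih =>
    have hsplit : (mk (x :: t))⁻¹ * v * mk (x :: t) =
        (mk t)⁻¹ * ((mk [x])⁻¹ * v * mk [x]) * mk t := by
      rw [← List.singleton_append, ← mul_mk]; group
    rcases conj_letter_eq_mk_rotate_or_isReduced (isReduced_toWord (x := v)) x with
      ⟨k, hk⟩ | hred
    · rw [mk_toWord] at hk
      have hrot : ((mk [x])⁻¹ * v * mk [x]).toWord = v.toWord.rotate k := by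
        rw [hk, toWord_mk, (hv.rotate k).isReduced.reduce_eq]
      obtain ⟨m, hm⟩ := ih (hC.infix (List.suffix_cons x t).isInfix) (hrot ▸ hv.rotate k)
        (hsplit ▸ hconj)
      exact ⟨k + m, by rw [hsplit, hm, hrot, List.rotate_rotate]⟩
    · rw [← mk_toWord (x := v),
        toWord_inv_mk_mul_mk_mul_mk (isReduced_invRev_append_append_cons hC hred)] at hconj
      exact absurd hconj (not_isCyclicallyReduced_invRev_append_append (List.cons_ne_nil x t))

theorem isConj_iff_exists_rotate [DecidableEq α] {v₁ v₂ : FreeGroup α}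
    (h₁ : IsCyclicallyReduced v₁.toWord) (h₂ : IsCyclicallyReduced v₂.toWord) :
    IsConj v₁ v₂ ↔ ∃ k, v₂.toWord = v₁.toWord.rotate k := by
  constructor
  · intro h
    obtain ⟨c, rfl⟩ := isConj_iff.mp h
    simpa only [mk_toWord, inv_inv] using exists_rotate_of_isCyclicallyReduced_conj
      (C := c⁻¹.toWord) isReduced_toWord h₁ (by simpa only [mk_toWord, inv_inv] using h₂)
  · rintro ⟨k, hk⟩
    simpa only [mk_toWord, ← hk] using isConj_mk_rotate v₁.toWord k

end FreeGroup

theorem CyclRedWord.isCyclicallyReduced_toWord {α : Type*} [DecidableEq α] {v : FreeGroup α}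
    (h : CyclRedWord v.toWord) : FreeGroup.IsCyclicallyReduced v.toWord := by
  refine ⟨FreeGroup.isReduced_toWord, fun b hb a ha hab => ?_⟩
  have := h a b ha hb
  obtain ⟨a₁, a₂⟩ := a; obtain ⟨b₁, b₂⟩ := b
  cases a₂ <;> cases b₂ <;> simp_all [IsInvPair]

/-- Two elements of a free group are conjugate iff their cyclically reduced
forms are cyclic rotations of each other. -/
theorem freeGroup_isConj_iff_rotate {α : Type*} [DecidableEq α]
    (w₁ w₂ v₁ v₂ : FreeGroup α)
    (h₁ : ∃ u, w₁ = u⁻¹ * v₁ * u) (hc₁ : CyclRedWord v₁.toWord)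
    (h₂ : ∃ u, w₂ = u⁻¹ * v₂ * u) (hc₂ : CyclRedWord v₂.toWord) :
    IsConj w₁ w₂ ↔ ∃ k, v₂.toWord = v₁.toWord.rotate k := by
  obtain ⟨u₁, rfl⟩ := h₁
  obtain ⟨u₂, rfl⟩ := h₂
  have hconjugates (u v : FreeGroup α) : conjugatesOf (u⁻¹ * v * u) = conjugatesOf v :=
    isConj_iff_conjugatesOf_eq.mp (isConj_iff.mpr ⟨u, by group⟩)
  rw [isConj_iff_conjugatesOf_eq, hconjugates, hconjugates, ← isConj_iff_conjugatesOf_eq]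
  exact FreeGroup.isConj_iff_exists_rotate hc₁.isCyclicallyReduced_toWord
    hc₂.isCyclicallyReduced_toWord
end
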